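/- Fix an integer p ≥ 1, real parameters (β_q)_{q≥1} with only finitely many nonzero, and h ∈ ℝ. Suppose that: (i) for every x in some open neighborhood of β_p, lim_{N→∞} E|ψ_N(x) − F_N(x)| = 0, where ψ_N(x) and F_N(x) are the random and averaged free energies of the mixed model in which the coefficient β_p of H_p is replaced by x; (ii) for every x in that neighborhood, F_N(x) converges as N → ∞ to a limit P(x); and (iii) P is differentiable at β_p. Then lim_{N→∞} N^{−1} E|⟨H_p(σ)⟩_{β_p} − E⟨H_p(σ)⟩_{β_p}| = 0. -/

import Mathlib

open MeasureTheory ProbabilityTheory Filter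

noncomputable section

/-- A spin configuration on `N` sites; `true ↦ +1`, `false ↦ -1`. -/
abbrev Config (N : ℕ) := Fin N → Bool

/-- The spin value of a site. -/
def spin (b : Bool) : ℝ := if b then 1 else -1

variable {Ω : Type*} [MeasurableSpace Ω]

/-- The `p`-spin Hamiltonian
`H_p(σ) = N^{-(p-1)/2} ∑_{i₁,…,i_p} g_{i₁,…,i_p} σ_{i₁}⋯σ_{i_p}`. -/
def Hp (N p : ℕ) (g : (Fin p → Fin N) → Ω → ℝ) (σ : Config N) (ω : Ω) : ℝ :=
  (N : ℝ) ^ (-(((p : ℝ) - 1) / 2)) *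
    ∑ i : Fin p → Fin N, g i ω * ∏ k, spin (σ (i k))

/-- The Boltzmann weight `exp(∑_q β_q H_q(σ) + h ∑_i σ_i)`. -/
def weight (N : ℕ) (β : ℕ → ℝ) (h : ℝ)
    (g : (q : ℕ) → (Fin q → Fin N) → Ω → ℝ) (σ : Config N) (ω : Ω) : ℝ :=
  Real.exp ((∑ᶠ q, β q * Hp N q (g q) σ ω) + h * ∑ i, spin (σ i))

/-- The partition function `Z_N`. -/
def Zpart (N : ℕ) (β : ℕ → ℝ) (h : ℝ)
    (g : (q : ℕ) → (Fin q → Fin N) → Ω → ℝ) (ω : Ω) : ℝ :=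
  ∑ σ : Config N, weight N β h g σ ω

/-- The Gibbs measure `G_N(σ)`. -/
def gibbs (N : ℕ) (β : ℕ → ℝ) (h : ℝ)
    (g : (q : ℕ) → (Fin q → Fin N) → Ω → ℝ) (σ : Config N) (ω : Ω) : ℝ :=
  weight N β h g σ ω / Zpart N β h g ω

/-- The Gibbs average `⟨f⟩` of a (possibly random) function of `n` replicas. -/
def gibbsAvg (N : ℕ) (β : ℕ → ℝ) (h : ℝ)
    (g : (q : ℕ) → (Fin q → Fin N) → Ω → ℝ) (n : ℕ)
    (f : (Fin n → Config N) → Ω → ℝ) (ω : Ω) : ℝ :=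
  ∑ σs : Fin n → Config N, f σs ω * ∏ l, gibbs N β h g (σs l) ω

/-- The overlap `R_{1,2}` of two configurations. -/
def overlapR (N : ℕ) (σ τ : Config N) : ℝ :=
  (N : ℝ)⁻¹ * ∑ i, spin (σ i) * spin (τ i)

/-- The random free energy `ψ_N = N⁻¹ log Z_N`. -/
def psiFE (N : ℕ) (β : ℕ → ℝ) (h : ℝ)
    (g : (q : ℕ) → (Fin q → Fin N) → Ω → ℝ) (ω : Ω) : ℝ :=
  (N : ℝ)⁻¹ * Real.log (Zpart N β h g ω)

/-- The disorder of the mixed model, for all `p`, is an i.i.d. standard Gaussian family. -/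
def IsGaussianDisorder (N : ℕ) (g : (q : ℕ) → (Fin q → Fin N) → Ω → ℝ)
    (μ : Measure Ω) : Prop :=
  (∀ q (i : Fin q → Fin N), Measurable (g q i)) ∧
  (∀ q (i : Fin q → Fin N), Measure.map (g q i) μ = gaussianReal 0 1) ∧
  iIndepFun
    (fun qi : Σ q : ℕ, (Fin q → Fin N) => g qi.1 qi.2) μ

end

/-!
For each disorder `ω`, `x ↦ ψ_N(x)` is convex (a log-sum-exp in `x`) with derivative
`N⁻¹ ⟨H_p⟩` at `β_p`, so this derivative is trapped between the slopes of `ψ_N` over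
`[x⁻, β_p]` and `[β_p, x⁺]`. Each slope concentrates because `ψ_N(x⁻)`, `ψ_N(β_p)`, `ψ_N(x⁺)` do,
and its mean tends to a slope of `P`, which is close to `P'(β_p)` once `x^±` are close to `β_p`.
Hence `N⁻¹ ⟨H_p⟩` is eventually close in `L¹` to the constant `P'(β_p)`, and
`E|Y - EY| ≤ 2 E|Y - c|` for every constant `c`.
-/

open Real Set Topology

section LogSumExp

variable {S : Type*} [Fintype S] (a b : S → ℝ)

noncomputable def cumulant (x : ℝ) : ℝ := log (∑ σ, exp (x * a σ + b σ))

noncomputable def tiltedMean (x : ℝ) : ℝ :=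
  (∑ σ, a σ * exp (x * a σ + b σ)) / ∑ σ, exp (x * a σ + b σ)

lemma hasDerivAt_sum_mul_exp (c : S → ℝ) (x : ℝ) :
    HasDerivAt (fun y => ∑ σ, c σ * exp (y * a σ + b σ))
      (∑ σ, c σ * a σ * exp (x * a σ + b σ)) x := by
  refine HasDerivAt.fun_sum fun σ _ => ?_
  exact ((((hasDerivAt_mul_const (a σ)).add_const (b σ)).exp).const_mul (c σ)).congr_deriv
    (by ring)

variable [Nonempty S]

lemma sum_exp_pos (c : S → ℝ) : 0 < ∑ σ, exp (c σ) :=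
  Finset.sum_pos (fun _ _ => exp_pos _) Finset.univ_nonempty

lemma hasDerivAt_cumulant (x : ℝ) : HasDerivAt (cumulant a b) (tiltedMean a b x) x := by
  have hZ := hasDerivAt_sum_mul_exp a b 1 x
  simp only [Pi.one_apply, one_mul] at hZ
  exact hZ.log (sum_exp_pos _).ne'

lemma monotone_tiltedMean : Monotone (tiltedMean a b) := by
  have hZ := hasDerivAt_sum_mul_exp a b 1
  have hN := hasDerivAt_sum_mul_exp a b a
  simp only [Pi.one_apply, one_mul] at hZ
  have hM : ∀ x, HasDerivAt (tiltedMean a b) _ x := fun x =>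
    (hN x).div (hZ x) (sum_exp_pos _).ne'
  refine monotone_of_deriv_nonneg (fun x => (hM x).differentiableAt) fun x => ?_
  rw [(hM x).deriv]
  refine div_nonneg (sub_nonneg.2 ?_) (sq_nonneg _)
  -- the numerator is `Z² · Var(a)`, nonnegative by Cauchy–Schwarz
  have := Finset.sum_sq_le_sum_mul_sum_of_sq_le_mul Finset.univ
    (r := fun σ => a σ * exp (x * a σ + b σ)) (f := fun σ => a σ * a σ * exp (x * a σ + b σ))
    (g := fun σ => exp (x * a σ + b σ)) (fun _ _ => mul_nonneg (mul_self_nonneg _) (exp_pos _).le)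
    (fun _ _ => (exp_pos _).le) (fun _ _ => le_of_eq (by ring))
  nlinarith [this]

lemma convexOn_cumulant : ConvexOn ℝ univ (cumulant a b) := by
  have hderiv : deriv (cumulant a b) = tiltedMean a b :=
    funext fun x => (hasDerivAt_cumulant a b x).deriv
  exact Monotone.convexOn_univ_of_deriv (fun x => (hasDerivAt_cumulant a b x).differentiableAt)
    (hderiv ▸ monotone_tiltedMean a b)

lemma abs_log_sum_exp_le (c : S → ℝ) :
    |log (∑ σ, exp (c σ))| ≤ log (Fintype.card S) + ∑ σ, |c σ| := by
  set M := ∑ σ, |c σ|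
  have hcM : ∀ σ, |c σ| ≤ M := fun σ =>
    Finset.single_le_sum (f := fun σ => |c σ|) (fun _ _ => abs_nonneg _) (Finset.mem_univ σ)
  obtain ⟨σ₀⟩ := ‹Nonempty S›
  have hcard : 0 ≤ log (Fintype.card S) := log_nonneg (by exact_mod_cast Fintype.card_pos)
  have hlower : exp (-M) ≤ ∑ σ, exp (c σ) :=
    (exp_le_exp.2 (neg_le_of_abs_le (hcM σ₀))).trans
      (Finset.single_le_sum (f := fun σ => exp (c σ)) (fun _ _ => (exp_pos _).le)
        (Finset.mem_univ σ₀))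
  have hupper : ∑ σ, exp (c σ) ≤ Fintype.card S * exp M := by
    simpa using Finset.sum_le_sum fun σ (_ : σ ∈ Finset.univ) =>
      exp_le_exp.2 (le_of_abs_le (hcM σ))
  have h1 := log_le_log (exp_pos _) hlower
  have h2 := log_le_log (sum_exp_pos c) hupper
  rw [log_exp] at h1
  rw [log_mul (by positivity) (exp_pos _).ne', log_exp] at h2
  exact abs_le.2 ⟨by linarith, by linarith⟩

end LogSumExp

section Concentration

variable {Ω : Type*} [MeasurableSpace Ω] {μ : Measure Ω}

noncomputable def meanAbsDev (μ : Measure Ω) (f : Ω → ℝ) : ℝ :=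
  ∫ ω, |f ω - ∫ ω', f ω' ∂μ| ∂μ

lemma meanAbsDev_const_mul (c : ℝ) (f : Ω → ℝ) :
    meanAbsDev μ (fun ω => c * f ω) = |c| * meanAbsDev μ f := by
  simp only [meanAbsDev, integral_const_mul, ← mul_sub, abs_mul]

lemma meanAbsDev_le_two_mul [IsProbabilityMeasure μ] {f : Ω → ℝ}
    (hf : AEStronglyMeasurable f μ) (c : ℝ) :
    meanAbsDev μ f ≤ 2 * ∫ ω, |f ω - c| ∂μ := by
  by_cases hint : Integrable f μ
  · have hfc : Integrable (fun ω => |f ω - c|) μ := (hint.sub (integrable_const c)).abs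
    have hmean : |c - ∫ ω, f ω ∂μ| ≤ ∫ ω, |f ω - c| ∂μ := by
      have : (∫ ω, f ω ∂μ) - c = ∫ ω, (f ω - c) ∂μ := by
        rw [integral_sub hint (integrable_const c), integral_const, probReal_univ, one_smul]
      rw [abs_sub_comm, this]
      exact abs_integral_le_integral_abs
    calc meanAbsDev μ f ≤ ∫ ω, (|f ω - c| + |c - ∫ ω', f ω' ∂μ|) ∂μ :=
          integral_mono (hint.sub (integrable_const _)).abs (hfc.add (integrable_const _))
            fun ω => abs_sub_le _ _ _
      _ = (∫ ω, |f ω - c| ∂μ) + |c - ∫ ω', f ω' ∂μ| := by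
          rw [integral_add hfc (integrable_const _), integral_const, probReal_univ, one_smul]
      _ ≤ 2 * ∫ ω, |f ω - c| ∂μ := by linarith
  -- otherwise `|f - ∫ f|` is not integrable either, and `meanAbsDev μ f` is the junk value `0`
  · have hdev : ¬ Integrable (fun ω => |f ω - ∫ ω', f ω' ∂μ|) μ := by
      intro h
      have hsub : AEStronglyMeasurable (fun ω => f ω - ∫ ω', f ω' ∂μ) μ :=
        hf.sub aestronglyMeasurable_const
      have h' : Integrable (fun ω => f ω - ∫ ω', f ω' ∂μ) μ :=
        (integrable_norm_iff hsub).1 (by simpa only [Real.norm_eq_abs] using h)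
      exact hint ((h'.add (integrable_const (∫ ω', f ω' ∂μ))).congr
        (ae_of_all _ fun ω => sub_add_cancel (f ω) _))
    rw [meanAbsDev, integral_undef hdev]
    exact mul_nonneg zero_le_two (integral_nonneg fun _ => abs_nonneg _)

lemma abs_slope_sub_le (f F : ℝ → ℝ) (x₀ x c : ℝ) :
    |slope f x₀ x - c| ≤ (|f x - F x| + |f x₀ - F x₀|) / |x - x₀| + |slope F x₀ x - c| := by
  have hsplit : slope f x₀ x - c
      = ((f x - F x) - (f x₀ - F x₀)) / (x - x₀) + (slope F x₀ x - c) := by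
    simp only [slope_def_field]; ring
  rw [hsplit]
  refine (abs_add_le _ _).trans (add_le_add_left ?_ _)
  rw [abs_div]
  exact div_le_div_of_nonneg_right (abs_sub _ _) (abs_nonneg _)

variable {ψ : ℝ → Ω → ℝ}

noncomputable def slopeDevBound (μ : Measure Ω) (ψ : ℝ → Ω → ℝ) (x₀ c x : ℝ) : ℝ :=
  (meanAbsDev μ (ψ x) + meanAbsDev μ (ψ x₀)) / |x - x₀|
    + |slope (fun y => ∫ ω, ψ y ω ∂μ) x₀ x - c|

lemma integrable_slope (hψ : ∀ x, Integrable (ψ x) μ) (x₀ x : ℝ) :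
    Integrable (fun ω => slope (fun y => ψ y ω) x₀ x) μ := by
  simp only [slope_def_field]
  exact ((hψ x).sub (hψ x₀)).div_const _

lemma integral_abs_slope_sub_le [IsProbabilityMeasure μ] (hψ : ∀ x, Integrable (ψ x) μ)
    (x₀ x c : ℝ) :
    ∫ ω, |slope (fun y => ψ y ω) x₀ x - c| ∂μ ≤ slopeDevBound μ ψ x₀ c x := by
  have hdev : ∀ y, Integrable (fun ω => |ψ y ω - ∫ ω', ψ y ω' ∂μ|) μ := fun y =>
    ((hψ y).sub (integrable_const _)).abs
  have hsum : Integrable (fun ω => (|ψ x ω - ∫ ω', ψ x ω' ∂μ| + |ψ x₀ ω - ∫ ω', ψ x₀ ω' ∂μ|)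
      / |x - x₀|) μ := ((hdev x).add (hdev x₀)).div_const _
  calc ∫ ω, |slope (fun y => ψ y ω) x₀ x - c| ∂μ
      ≤ ∫ ω, ((|ψ x ω - ∫ ω', ψ x ω' ∂μ| + |ψ x₀ ω - ∫ ω', ψ x₀ ω' ∂μ|) / |x - x₀|
          + |slope (fun y => ∫ ω, ψ y ω ∂μ) x₀ x - c|) ∂μ :=
        integral_mono ((integrable_slope hψ x₀ x).sub (integrable_const c)).abs
          (hsum.add (integrable_const _))
          fun ω => abs_slope_sub_le (fun y => ψ y ω) (fun y => ∫ ω', ψ y ω' ∂μ) x₀ x c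
    _ = _ := by
        rw [integral_add hsum (integrable_const _),
          integral_div, integral_add (hdev x) (hdev x₀), integral_const, probReal_univ, one_smul,
          slopeDevBound, meanAbsDev, meanAbsDev]

lemma aestronglyMeasurable_of_hasDerivAt (hψ : ∀ x, AEStronglyMeasurable (ψ x) μ)
    {ψ' : Ω → ℝ} {x₀ : ℝ} (hderiv : ∀ ω, HasDerivAt (fun x => ψ x ω) (ψ' ω) x₀) :
    AEStronglyMeasurable ψ' μ := by
  have hseq : Tendsto (fun n : ℕ => x₀ + 1 / ((n : ℝ) + 1)) atTop (𝓝[≠] x₀) := by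
    refine tendsto_nhdsWithin_iff.2 ⟨?_, Eventually.of_forall fun n => ?_⟩
    · simpa using (tendsto_one_div_add_atTop_nhds_zero_nat (𝕜 := ℝ)).const_add x₀
    · simp only [mem_compl_iff, mem_singleton_iff, add_eq_left]
      positivity
  refine aestronglyMeasurable_of_tendsto_ae atTop (fun n => ?_)
    (ae_of_all _ fun ω => (hasDerivAt_iff_tendsto_slope.1 (hderiv ω)).comp hseq)
  simp only [Function.comp_def, slope_def_field]
  exact (((hψ _).aemeasurable.sub (hψ x₀).aemeasurable).div_const _).aestronglyMeasurable

lemma tendsto_slopeDevBound {ι : Type*} {l : Filter ι} {ψ : ι → ℝ → Ω → ℝ} {P : ℝ → ℝ}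
    {x₀ c x : ℝ} (hconc₀ : Tendsto (fun i => meanAbsDev μ (ψ i x₀)) l (𝓝 0))
    (hconc : Tendsto (fun i => meanAbsDev μ (ψ i x)) l (𝓝 0))
    (hmean₀ : Tendsto (fun i => ∫ ω, ψ i x₀ ω ∂μ) l (𝓝 (P x₀)))
    (hmean : Tendsto (fun i => ∫ ω, ψ i x ω ∂μ) l (𝓝 (P x))) :
    Tendsto (fun i => slopeDevBound μ (ψ i) x₀ c x) l (𝓝 |slope P x₀ x - c|) := by
  have hslope : Tendsto (fun i => slope (fun y => ∫ ω, ψ i y ω ∂μ) x₀ x) l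
      (𝓝 (slope P x₀ x)) := by
    simp only [slope_def_field]
    exact (hmean.sub hmean₀).div_const _
  have h := ((hconc.add hconc₀).div_const |x - x₀|).add (hslope.sub_const c).abs
  rwa [add_zero, zero_div, zero_add] at h

lemma abs_sub_le_of_convexOn {f : ℝ → ℝ} {f' x₀ xm xp : ℝ} (hf : ConvexOn ℝ univ f)
    (hderiv : HasDerivAt f f' x₀) (hm : xm < x₀) (hp : x₀ < xp) (c : ℝ) :
    |f' - c| ≤ |slope f x₀ xp - c| + |slope f x₀ xm - c| := by
  have hright := hf.le_slope_of_hasDerivAt (mem_univ _) (mem_univ _) hp hderiv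
  have hleft := hf.slope_le_of_hasDerivAt (mem_univ _) (mem_univ _) hm hderiv
  rw [slope_comm] at hleft
  calc |f' - c| ≤ max |slope f x₀ xm - c| |slope f x₀ xp - c| :=
        abs_le_max_abs_abs (sub_le_sub_right hleft c) (sub_le_sub_right hright c)
    _ ≤ |slope f x₀ xp - c| + |slope f x₀ xm - c| := by
        rw [max_comm]; exact max_le_add_of_nonneg (abs_nonneg _) (abs_nonneg _)

lemma meanAbsDev_le_slopeDevBound [IsProbabilityMeasure μ] {Y : Ω → ℝ} {x₀ xm xp : ℝ}
    (hψ : ∀ x, Integrable (ψ x) μ) (hconv : ∀ ω, ConvexOn ℝ univ (fun x => ψ x ω))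
    (hderiv : ∀ ω, HasDerivAt (fun x => ψ x ω) (Y ω) x₀) (hm : xm < x₀) (hp : x₀ < xp)
    (c : ℝ) :
    meanAbsDev μ Y ≤ 2 * (slopeDevBound μ ψ x₀ c xp + slopeDevBound μ ψ x₀ c xm) := by
  have hdev : ∀ x, Integrable (fun ω => |slope (fun y => ψ y ω) x₀ x - c|) μ := fun x =>
    ((integrable_slope hψ x₀ x).sub (integrable_const c)).abs
  calc meanAbsDev μ Y
      ≤ 2 * ∫ ω, |Y ω - c| ∂μ :=
        meanAbsDev_le_two_mul (aestronglyMeasurable_of_hasDerivAt (fun x => (hψ x).1) hderiv) c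
    _ ≤ 2 * ∫ ω, (|slope (fun y => ψ y ω) x₀ xp - c|
          + |slope (fun y => ψ y ω) x₀ xm - c|) ∂μ := by
        refine mul_le_mul_of_nonneg_left ?_ zero_le_two
        exact integral_mono_of_nonneg (ae_of_all _ fun _ => abs_nonneg _)
          ((hdev xp).add (hdev xm))
          (ae_of_all _ fun ω => abs_sub_le_of_convexOn (hconv ω) (hderiv ω) hm hp c)
    _ ≤ 2 * (slopeDevBound μ ψ x₀ c xp + slopeDevBound μ ψ x₀ c xm) := by
        rw [integral_add (hdev xp) (hdev xm)]
        gcongr <;> exact integral_abs_slope_sub_le hψ _ _ _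

lemma HasDerivAt.eventually_abs_slope_sub_lt {f : ℝ → ℝ} {f' x₀ η : ℝ}
    (hf : HasDerivAt f f' x₀) (hη : 0 < η) : ∀ᶠ x in 𝓝[≠] x₀, |slope f x₀ x - f'| < η := by
  simpa [Real.dist_eq] using Metric.tendsto_nhds.1 (hasDerivAt_iff_tendsto_slope.1 hf) η hη

theorem tendsto_meanAbsDev_of_hasDerivAt [IsProbabilityMeasure μ] {ι : Type*} {l : Filter ι}
    {ψ : ι → ℝ → Ω → ℝ} {Y : ι → Ω → ℝ} {P : ℝ → ℝ} {x₀ ε : ℝ} (hε : 0 < ε)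
    (hψ : ∀ i x, Integrable (ψ i x) μ) (hconv : ∀ i ω, ConvexOn ℝ univ (fun x => ψ i x ω))
    (hderiv : ∀ i ω, HasDerivAt (fun x => ψ i x ω) (Y i ω) x₀)
    (hconc : ∀ x, |x - x₀| < ε → Tendsto (fun i => meanAbsDev μ (ψ i x)) l (𝓝 0))
    (hmean : ∀ x, |x - x₀| < ε → Tendsto (fun i => ∫ ω, ψ i x ω ∂μ) l (𝓝 (P x)))
    (hP : DifferentiableAt ℝ P x₀) :
    Tendsto (fun i => meanAbsDev μ (Y i)) l (𝓝 0) := by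
  set P' := deriv P x₀
  have hlim : ∀ x, |x - x₀| < ε →
      Tendsto (fun i => slopeDevBound μ (ψ i) x₀ P' x) l (𝓝 |slope P x₀ x - P'|) :=
    fun x hx => tendsto_slopeDevBound (hconc x₀ (by simpa using hε)) (hconc x hx)
      (hmean x₀ (by simpa using hε)) (hmean x hx)
  refine tendsto_order.2 ⟨fun a ha => Eventually.of_forall fun i =>
    ha.trans_le (integral_nonneg fun _ => abs_nonneg _), fun η hη => ?_⟩
  have hnear : ∀ᶠ x in 𝓝[≠] x₀, |slope P x₀ x - P'| < η / 4 ∧ |x - x₀| < ε :=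
    (hP.hasDerivAt.eventually_abs_slope_sub_lt (by positivity)).and
      (nhdsWithin_le_nhds (eventually_abs_sub_lt x₀ hε))
  obtain ⟨xp, ⟨hPp, hxp⟩, hp⟩ :=
    ((hnear.filter_mono (nhdsGT_le_nhdsNE x₀)).and eventually_mem_nhdsWithin).exists
  obtain ⟨xm, ⟨hPm, hxm⟩, hm⟩ :=
    ((hnear.filter_mono (nhdsLT_le_nhdsNE x₀)).and eventually_mem_nhdsWithin).exists
  filter_upwards [(((hlim xp hxp).add (hlim xm hxm)).const_mul 2).eventually_lt_const
    (show 2 * (|slope P x₀ xp - P'| + |slope P x₀ xm - P'|) < η by linarith)] with i hi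
  exact (meanAbsDev_le_slopeDevBound (hψ i) (hconv i) (hderiv i) hm hp P').trans_lt hi

end Concentration

lemma finsum_update_mul {ι R : Type*} [DecidableEq ι] [Semiring R] {β : ι → R}
    (hβ : β.support.Finite) (f : ι → R) (p : ι) (x : R) :
    ∑ᶠ q, Function.update β p x q * f q = x * f p + ∑ᶠ q, Function.update β p 0 q * f q := by
  have hsplit : ∀ q, Function.update β p x q * f q
      = (Pi.single p x : ι → R) q * f q + Function.update β p 0 q * f q := by
    intro q
    rcases eq_or_ne q p with rfl | hq <;> simp [*]
  have hsingle : (Pi.single p x).HasFiniteSupport :=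
    (finite_singleton p).subset Pi.support_single_subset
  have hupdate : (Function.update β p 0).HasFiniteSupport := by
    rw [Function.HasFiniteSupport, Function.support_update_zero]
    exact hβ.sdiff
  rw [finsum_congr hsplit, finsum_add_distrib (hsingle.fun_mul_left f) (hupdate.fun_mul_left f),
    finsum_eq_single _ p fun q hq => by simp [hq]]
  simp

lemma IsGaussianDisorder.integrable {Ω : Type*} [MeasurableSpace Ω]
    {μ : Measure Ω} {N : ℕ} {g : (q : ℕ) → (Fin q → Fin N) → Ω → ℝ}
    (hg : IsGaussianDisorder N g μ) (q : ℕ) (i : Fin q → Fin N) : Integrable (g q i) μ := by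
  have hid : Integrable id (μ.map (g q i)) := by
    rw [hg.2.1 q i]
    exact (memLp_id_gaussianReal 1).integrable le_rfl
  exact (integrable_map_measure aestronglyMeasurable_id (hg.1 q i).aemeasurable).1 hid

section SpinGlass

variable {Ω : Type*} {N : ℕ} {β : ℕ → ℝ} {h : ℝ}
  {g : (q : ℕ) → (Fin q → Fin N) → Ω → ℝ}

noncomputable def energy (N : ℕ) (β : ℕ → ℝ) (h : ℝ) (g : (q : ℕ) → (Fin q → Fin N) → Ω → ℝ)
    (σ : Config N) (ω : Ω) : ℝ :=
  (∑ᶠ q, β q * Hp N q (g q) σ ω) + h * ∑ i, spin (σ i)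

lemma weight_eq_exp_energy (σ : Config N) (ω : Ω) :
    weight N β h g σ ω = exp (energy N β h g σ ω) :=
  rfl

lemma energy_update (hβ : β.support.Finite) (p : ℕ) (x : ℝ) (σ : Config N) (ω : Ω) :
    energy N (Function.update β p x) h g σ ω
      = x * Hp N p (g p) σ ω + energy N (Function.update β p 0) h g σ ω := by
  rw [energy, energy, finsum_update_mul hβ, add_assoc]

lemma psiFE_update (hβ : β.support.Finite) (p : ℕ) (x : ℝ) (ω : Ω) :
    psiFE N (Function.update β p x) h g ω
      = (N : ℝ)⁻¹ * cumulant (fun σ => Hp N p (g p) σ ω)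
          (fun σ => energy N (Function.update β p 0) h g σ ω) x := by
  simp only [psiFE, Zpart, weight_eq_exp_energy, cumulant, energy_update hβ p x]

lemma gibbsAvg_one (f : Config N → Ω → ℝ) (ω : Ω) :
    gibbsAvg N β h g 1 (fun σs ω' => f (σs 0) ω') ω
      = (∑ σ, f σ ω * weight N β h g σ ω) / Zpart N β h g ω := by
  rw [gibbsAvg, Finset.sum_div]
  exact Fintype.sum_equiv (Equiv.funUnique (Fin 1) (Config N)) _ _ fun σs => by
    simp [gibbs, mul_div_assoc]

lemma gibbsAvg_Hp (hβ : β.support.Finite) (p : ℕ) (ω : Ω) :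
    gibbsAvg N β h g 1 (fun σs ω' => Hp N p (g p) (σs 0) ω') ω
      = tiltedMean (fun σ => Hp N p (g p) σ ω)
          (fun σ => energy N (Function.update β p 0) h g σ ω) (β p) := by
  conv_lhs => rw [← Function.update_eq_self p β]
  simp only [gibbsAvg_one, Zpart, weight_eq_exp_energy, tiltedMean, energy_update hβ p (β p)]

lemma convexOn_psiFE_update (hβ : β.support.Finite) (p : ℕ) (ω : Ω) :
    ConvexOn ℝ univ (fun x => psiFE N (Function.update β p x) h g ω) := by
  simp only [psiFE_update hβ]
  exact (convexOn_cumulant _ _).smul (by positivity)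

lemma hasDerivAt_psiFE_update (hβ : β.support.Finite) (p : ℕ) (ω : Ω) :
    HasDerivAt (fun x => psiFE N (Function.update β p x) h g ω)
      ((N : ℝ)⁻¹ * gibbsAvg N β h g 1 (fun σs ω' => Hp N p (g p) (σs 0) ω') ω) (β p) := by
  simp only [psiFE_update hβ, gibbsAvg_Hp hβ]
  exact (hasDerivAt_cumulant _ _ _).const_mul _

variable [MeasurableSpace Ω] {μ : Measure Ω}

lemma integrable_Hp {q : ℕ} {g : (Fin q → Fin N) → Ω → ℝ} (hg : ∀ i, Integrable (g i) μ)
    (σ : Config N) : Integrable (Hp N q g σ) μ :=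
  (integrable_finsetSum _ fun i _ => (hg i).mul_const _).const_mul _

variable [IsFiniteMeasure μ]

lemma integrable_energy (hβ : β.support.Finite) (hg : ∀ q i, Integrable (g q i) μ)
    (σ : Config N) : Integrable (energy N β h g σ) μ := by
  have hsum : energy N β h g σ
      = fun ω => (∑ q ∈ hβ.toFinset, β q * Hp N q (g q) σ ω) + h * ∑ i, spin (σ i) := by
    funext ω
    rw [energy, finsum_eq_sum_of_support_subset]
    exact (Function.support_mul_subset_left _ _).trans hβ.coe_toFinset.superset
  rw [hsum]
  exact (integrable_finsetSum _ fun q _ =>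
    (integrable_Hp (hg q) σ).const_mul _).add (integrable_const _)

lemma integrable_cumulant {S : Type*} [Fintype S] [Nonempty S] {a b : Ω → S → ℝ}
    (ha : ∀ σ, Integrable (a · σ) μ) (hb : ∀ σ, Integrable (b · σ) μ) (x : ℝ) :
    Integrable (fun ω => cumulant (a ω) (b ω) x) μ := by
  have hexp : ∀ σ, Integrable (fun ω => x * a ω σ + b ω σ) μ := fun σ =>
    ((ha σ).const_mul x).add (hb σ)
  refine Integrable.mono' ((integrable_const _).add (integrable_finsetSum _ fun σ _ =>
    (hexp σ).abs)) ?_ (ae_of_all _ fun ω => abs_log_sum_exp_le _)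
  exact (Finset.aemeasurable_fun_sum _ fun σ _ =>
    (hexp σ).aemeasurable.exp).log.aestronglyMeasurable

lemma integrable_psiFE_update (hβ : β.support.Finite) (hg : ∀ q i, Integrable (g q i) μ)
    (p : ℕ) (x : ℝ) : Integrable (psiFE N (Function.update β p x) h g) μ := by
  have hβ₀ : (Function.update β p 0).support.Finite := by
    rw [Function.support_update_zero]
    exact hβ.sdiff
  simp only [funext (psiFE_update hβ p x (h := h) (g := g))]
  exact (integrable_cumulant (fun σ => integrable_Hp (hg p) σ)
    (fun σ => integrable_energy hβ₀ hg σ) x).const_mul _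

end SpinGlass

theorem statement11_general {Ω : Type*} [MeasurableSpace Ω] (μ : Measure Ω) [IsProbabilityMeasure μ]
    (p : ℕ) (β : ℕ → ℝ) (hβ : (Function.support β).Finite) (h : ℝ)
    (g : (N : ℕ) → (q : ℕ) → (Fin q → Fin N) → Ω → ℝ)
    (hg : ∀ N, IsGaussianDisorder N (g N) μ)
    (P : ℝ → ℝ) (ε : ℝ) (hε : 0 < ε)
    (hconc : ∀ x, |x - β p| < ε →
      Tendsto (fun N => ∫ ω, |psiFE N (Function.update β p x) h (g N) ω -
          ∫ ω', psiFE N (Function.update β p x) h (g N) ω' ∂μ| ∂μ) atTop (nhds 0))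
    (hF : ∀ x, |x - β p| < ε →
      Tendsto (fun N => ∫ ω, psiFE N (Function.update β p x) h (g N) ω ∂μ)
        atTop (nhds (P x)))
    (hPdiff : DifferentiableAt ℝ P (β p)) :
    Tendsto (fun N : ℕ => (N : ℝ)⁻¹ * ∫ ω,
        |gibbsAvg N β h (g N) 1 (fun σs ω' => Hp N p (g N p) (σs 0) ω') ω -
          ∫ ω', gibbsAvg N β h (g N) 1
            (fun τs ω'' => Hp N p (g N p) (τs 0) ω'') ω' ∂μ| ∂μ)
      atTop (nhds 0) := by
  have hY := tendsto_meanAbsDev_of_hasDerivAt hε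
    (fun N x => integrable_psiFE_update hβ (hg N).integrable p x)
    (fun N ω => convexOn_psiFE_update hβ p ω) (fun N ω => hasDerivAt_psiFE_update hβ p ω)
    hconc hF hPdiff
  refine hY.congr fun N => ?_
  rw [meanAbsDev_const_mul, abs_inv, Nat.abs_cast]
  rfl

/-- Under the free-energy concentration and convergence hypotheses
(in a neighborhood of `β_p`, with `P` differentiable at `β_p`), the Gibbs average of `H_p`
concentrates: `N⁻¹ E|⟨H_p(σ)⟩ − E⟨H_p(σ)⟩| → 0`. -/
theorem statement11 {Ω : Type*} [MeasurableSpace Ω] (μ : Measure Ω) [IsProbabilityMeasure μ]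
    (p : ℕ) (hp : 1 ≤ p) (β : ℕ → ℝ) (hβ : (Function.support β).Finite) (h : ℝ)
    (g : (N : ℕ) → (q : ℕ) → (Fin q → Fin N) → Ω → ℝ)
    (hg : ∀ N, IsGaussianDisorder N (g N) μ)
    (P : ℝ → ℝ) (ε : ℝ) (hε : 0 < ε)
    (hconc : ∀ x, |x - β p| < ε →
      Tendsto (fun N => ∫ ω, |psiFE N (Function.update β p x) h (g N) ω -
          ∫ ω', psiFE N (Function.update β p x) h (g N) ω' ∂μ| ∂μ) atTop (nhds 0))
    (hF : ∀ x, |x - β p| < ε →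
      Tendsto (fun N => ∫ ω, psiFE N (Function.update β p x) h (g N) ω ∂μ)
        atTop (nhds (P x)))
    (hPdiff : DifferentiableAt ℝ P (β p)) :
    Tendsto (fun N : ℕ => (N : ℝ)⁻¹ * ∫ ω,
        |gibbsAvg N β h (g N) 1 (fun σs ω' => Hp N p (g N p) (σs 0) ω') ω -
          ∫ ω', gibbsAvg N β h (g N) 1
            (fun τs ω'' => Hp N p (g N p) (τs 0) ω'') ω' ∂μ| ∂μ)
      atTop (nhds 0) :=
  statement11_general μ p β hβ h g hg P ε hε hconc hF hPdiff
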